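/- arXiv:2206.12248 — 4 statements merged into one kernel-verified Lean document; each statement's English description precedes it below -/
import Mathlib

section
/- Let k ≥ 2 and consider Γ(Z_{2k}, {1, k+1}). If a set F of at most 2 vertices is deleted and the remaining vertex set T is such that every vertex in T has at least one out-neighbour and one in-neighbour in T, then the subdigraph induced by T is strongly connected. -/
/-- In `Γ(Z_{2k}, {1, k+1})` with `k ≥ 2`: if at most two vertices are deleted and in
the remaining set `T` every vertex keeps an out-neighbour and an in-neighbour, then the
induced subdigraph on `T` is strongly connected. -/
theorem circulant_even_induced_strongly_connected (k : ℕ) (hk : 2 ≤ k) [NeZero (2 * k)]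
    (T : Finset (ZMod (2 * k)))
    (hdel : (Finset.univ \ T).card ≤ 2)
    (hout : ∀ v ∈ T, v + 1 ∈ T ∨ v + (k : ZMod (2 * k)) + 1 ∈ T)
    (hin : ∀ v ∈ T, v - 1 ∈ T ∨ v - ((k : ZMod (2 * k)) + 1) ∈ T) :
    ∀ x ∈ T, ∀ y ∈ T, Relation.ReflTransGen
      (fun u v : ZMod (2 * k) => u ∈ T ∧ v ∈ T ∧
        (v - u = 1 ∨ v - u = (k : ZMod (2 * k)) + 1)) x y := by
  classical
  intro x hx y hy
  set Rel : ZMod (2*k) → ZMod (2*k) → Prop :=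
    fun u v => u ∈ T ∧ v ∈ T ∧ (v - u = 1 ∨ v - u = (k : ZMod (2*k)) + 1) with hRel
  haveI : NeZero k := ⟨by omega⟩
  have hdvd : k ∣ 2 * k := ⟨2, by ring⟩
  set φ : ZMod (2*k) →+* ZMod k := ZMod.castHom hdvd (ZMod k) with hφ
  have hφk : φ (k : ZMod (2*k)) = 0 := by
    simp [hφ]
  set R : Finset (ZMod (2*k)) := T.filter (fun v => Relation.ReflTransGen Rel x v) with hR
  set S : Finset (ZMod (2*k)) := T.filter (fun v => Relation.ReflTransGen Rel v y) with hS
  have hxR : x ∈ R := Finset.mem_filter.mpr ⟨hx, Relation.ReflTransGen.refl⟩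
  have hyS : y ∈ S := Finset.mem_filter.mpr ⟨hy, Relation.ReflTransGen.refl⟩
  have hstepR : ∀ v ∈ R, ∃ w ∈ R, φ w = φ v + 1 := by
    intro v hv
    rw [hR, Finset.mem_filter] at hv
    obtain ⟨hvT, hvp⟩ := hv
    rcases hout v hvT with h | h
    · refine ⟨v + 1, ?_, by simp⟩
      rw [hR, Finset.mem_filter]
      exact ⟨h, hvp.tail ⟨hvT, h, Or.inl (by ring)⟩⟩
    · refine ⟨v + (k : ZMod (2*k)) + 1, ?_, by simp [hφk]⟩
      rw [hR, Finset.mem_filter]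
      exact ⟨h, hvp.tail ⟨hvT, h, Or.inr (by ring)⟩⟩
  have hstepS : ∀ v ∈ S, ∃ w ∈ S, φ v = φ w + 1 := by
    intro v hv
    rw [hS, Finset.mem_filter] at hv
    obtain ⟨hvT, hvp⟩ := hv
    rcases hin v hvT with h | h
    · refine ⟨v - 1, ?_, by simp⟩
      rw [hS, Finset.mem_filter]
      exact ⟨h, hvp.head ⟨h, hvT, Or.inl (by ring)⟩⟩
    · refine ⟨v - ((k : ZMod (2*k)) + 1), ?_, by simp [hφk]⟩
      rw [hS, Finset.mem_filter]
      exact ⟨h, hvp.head ⟨h, hvT, Or.inr (by ring)⟩⟩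
  have hRn : ∀ n : ℕ, ∃ v ∈ R, φ v = φ x + n := by
    intro n
    induction n with
    | zero => exact ⟨x, hxR, by simp⟩
    | succ n ih =>
      obtain ⟨v, hv, hvφ⟩ := ih
      obtain ⟨w, hw, hwφ⟩ := hstepR v hv
      exact ⟨w, hw, by rw [hwφ, hvφ]; push_cast; ring⟩
  have hSn : ∀ n : ℕ, ∃ v ∈ S, φ v + n = φ y := by
    intro n
    induction n with
    | zero => exact ⟨y, hyS, by simp⟩
    | succ n ih =>
      obtain ⟨v, hv, hvφ⟩ := ih
      obtain ⟨w, hw, hwφ⟩ := hstepS v hv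
      exact ⟨w, hw, by rw [← hvφ, hwφ]; push_cast; ring⟩
  have hsurjR : ∀ c : ZMod k, ∃ v ∈ R, φ v = c := by
    intro c
    obtain ⟨v, hv, hvφ⟩ := hRn (c - φ x).val
    refine ⟨v, hv, ?_⟩
    rw [hvφ, ZMod.natCast_val, ZMod.cast_id]
    ring
  have hsurjS : ∀ c : ZMod k, ∃ v ∈ S, φ v = c := by
    intro c
    obtain ⟨v, hv, hvφ⟩ := hSn (φ y - c).val
    refine ⟨v, hv, ?_⟩
    have := hvφ
    rw [ZMod.natCast_val, ZMod.cast_id] at this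
    linear_combination this
  have hcardR : k ≤ R.card := by
    have him : R.image φ = Finset.univ := by
      apply Finset.eq_univ_iff_forall.mpr
      intro c
      obtain ⟨v, hv, hvφ⟩ := hsurjR c
      exact Finset.mem_image.mpr ⟨v, hv, hvφ⟩
    calc k = Fintype.card (ZMod k) := (ZMod.card k).symm
      _ = (Finset.univ : Finset (ZMod k)).card := (Finset.card_univ).symm
      _ = (R.image φ).card := by rw [him]
      _ ≤ R.card := Finset.card_image_le
  have hcardS : k ≤ S.card := by
    have him : S.image φ = Finset.univ := by
      apply Finset.eq_univ_iff_forall.mpr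
      intro c
      obtain ⟨v, hv, hvφ⟩ := hsurjS c
      exact Finset.mem_image.mpr ⟨v, hv, hvφ⟩
    calc k = Fintype.card (ZMod k) := (ZMod.card k).symm
      _ = (Finset.univ : Finset (ZMod k)).card := (Finset.card_univ).symm
      _ = (S.image φ).card := by rw [him]
      _ ≤ S.card := Finset.card_image_le
  by_cases hcap : ∃ v, v ∈ R ∧ v ∈ S
  · obtain ⟨v, hvR, hvS⟩ := hcap
    rw [hR, Finset.mem_filter] at hvR
    rw [hS, Finset.mem_filter] at hvS
    exact hvR.2.trans hvS.2
  · have hdisj : Disjoint R S := by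
      rw [Finset.disjoint_left]
      intro a ha hb
      exact hcap ⟨a, ha, hb⟩
    have hTuniv : T = Finset.univ := by
      apply Finset.eq_univ_of_card
      have h1 : (R ∪ S).card = R.card + S.card := Finset.card_union_of_disjoint hdisj
      have h2 : (R ∪ S) ⊆ T := by
        intro a ha
        rcases Finset.mem_union.mp ha with h | h
        · exact (Finset.mem_filter.mp h).1
        · exact (Finset.mem_filter.mp h).1
      have h3 : (R ∪ S).card ≤ T.card := Finset.card_le_card h2
      have h4 : T.card ≤ Fintype.card (ZMod (2*k)) := Finset.card_le_univ T
      rw [ZMod.card] at h4 ⊢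
      omega
    have key : ∀ n : ℕ, Relation.ReflTransGen Rel x (x + n) := by
      intro n
      induction n with
      | zero => simpa using Relation.ReflTransGen.refl
      | succ n ih =>
        refine ih.tail ?_
        refine ⟨by simp [hTuniv], by simp [hTuniv], Or.inl ?_⟩
        push_cast
        ring
    have hxy : x + ((y - x).val : ℕ) = y := by
      rw [ZMod.natCast_val, ZMod.cast_id]
      ring
    have := key (y - x).val
    rwa [hxy] at this
end

section
/- Let n be odd and not divisible by 3, and let t = 2·3^{-1} in Z_n. In G = Γ(Z_n, {1, t}), if the four vertices v_i, v_{i+1}, v_{i+t}, v_{i+1+t} are deleted (these are a vertex v together with its two out-neighbours and the common out-vertex v_{i+1+t}), then every remaining vertex still has at least one out-neighbour and at least one in-neighbour among the remaining vertices. -/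
/-- For `n` odd, not divisible by 3, and `t = 2·3⁻¹` in `Z_n`: in `Γ(Z_n, {1, t})`,
after deleting `v_i, v_{i+1}, v_{i+t}, v_{i+1+t}`, every remaining vertex keeps at
least one out-neighbour and at least one in-neighbour. -/
theorem circulant_odd_delete_four (n : ℕ) (hn : Odd n) (h3 : ¬ (3 ∣ n)) (i : ZMod n) :
    let t : ZMod n := 2 * (3 : ZMod n)⁻¹
    let F : Finset (ZMod n) := {i, i + 1, i + t, i + 1 + t}
    ∀ v : ZMod n, v ∉ F →
      ((v + 1 ∉ F ∨ v + t ∉ F) ∧ (v - 1 ∉ F ∨ v - t ∉ F)) := by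
  intro t F v hv
  rcases Nat.lt_or_ge n 2 with hlt | hge
  · interval_cases n
    · exact absurd hn (by decide)
    · exact absurd (by simp [F, Subsingleton.elim v i] : v ∈ F) hv
  -- basic nonvanishing facts
  have h1 : (1 : ZMod n) ≠ 0 := by
    intro h
    have : n ∣ 1 := by
      have := (ZMod.natCast_eq_zero_iff 1 n).mp (by exact_mod_cast h)
      exact this
    have := Nat.le_of_dvd one_pos this
    omega
  have h2 : (2 : ZMod n) ≠ 0 := by
    intro h
    have hd : n ∣ 2 := (ZMod.natCast_eq_zero_iff 2 n).mp (by exact_mod_cast h)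
    obtain ⟨k, hk⟩ := hn
    have := Nat.le_of_dvd (by norm_num) hd
    interval_cases n <;> omega
  have h4 : (4 : ZMod n) ≠ 0 := by
    intro h
    have hd : n ∣ 4 := (ZMod.natCast_eq_zero_iff 4 n).mp (by exact_mod_cast h)
    obtain ⟨k, hk⟩ := hn
    have := Nat.le_of_dvd (by norm_num) hd
    interval_cases n <;> omega
  have hc : Nat.Coprime 3 n := (Nat.Prime.coprime_iff_not_dvd Nat.prime_three).mpr h3
  have h31 : (3 : ZMod n) * (3 : ZMod n)⁻¹ = 1 := by
    have := ZMod.coe_mul_inv_eq_one 3 hc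
    push_cast at this
    exact this
  have ht : (3 : ZMod n) * t = 2 := by
    show (3 : ZMod n) * (2 * (3 : ZMod n)⁻¹) = 2
    linear_combination 2 * h31
  have ht1 : t ≠ 1 := fun h => h1 (by linear_combination ht - 3 * h)
  have ht2 : t ≠ 2 := fun h => h4 (by linear_combination ht - 3 * h)
  have h2t1 : 2 * t ≠ 1 := fun h => h1 (by linear_combination 3 * h - 2 * ht)
  have h2t2 : 2 * t ≠ 2 := fun h => h2 (by linear_combination 2 * ht - 3 * h)
  simp only [F, Finset.mem_insert, Finset.mem_singleton, not_or] at hv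
  obtain ⟨hvi, hv1, hvt, hv1t⟩ := hv
  constructor
  · by_contra h
    push_neg at h
    obtain ⟨e1, e2⟩ := h
    simp only [F, Finset.mem_insert, Finset.mem_singleton] at e1 e2
    rcases e1 with e1 | e1 | e1 | e1 <;> rcases e2 with e2 | e2 | e2 | e2 <;>
      first
      | exact hvi (by linear_combination e1)
      | exact hvi (by linear_combination e2)
      | exact hv1 (by linear_combination e1)
      | exact hv1 (by linear_combination e2)
      | exact hvt (by linear_combination e1)
      | exact hvt (by linear_combination e2)
      | exact hv1t (by linear_combination e1)
      | exact hv1t (by linear_combination e2)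
      | exact ht1 (by linear_combination e2 - e1)
      | exact ht1 (by linear_combination e1 - e2)
      | exact ht2 (by linear_combination e2 - e1)
      | exact ht2 (by linear_combination e1 - e2)
      | exact h2t1 (by linear_combination e2 - e1)
      | exact h2t1 (by linear_combination e1 - e2)
      | exact h2t2 (by linear_combination e2 - e1)
      | exact h2t2 (by linear_combination e1 - e2)
  · by_contra h
    push_neg at h
    obtain ⟨e1, e2⟩ := h
    simp only [F, Finset.mem_insert, Finset.mem_singleton] at e1 e2
    rcases e1 with e1 | e1 | e1 | e1 <;> rcases e2 with e2 | e2 | e2 | e2 <;>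
      first
      | exact hvi (by linear_combination e1)
      | exact hvi (by linear_combination e2)
      | exact hv1 (by linear_combination e1)
      | exact hv1 (by linear_combination e2)
      | exact hvt (by linear_combination e1)
      | exact hvt (by linear_combination e2)
      | exact hv1t (by linear_combination e1)
      | exact hv1t (by linear_combination e2)
      | exact ht1 (by linear_combination e2 - e1)
      | exact ht1 (by linear_combination e1 - e2)
      | exact ht2 (by linear_combination e2 - e1)
      | exact ht2 (by linear_combination e1 - e2)
      | exact h2t1 (by linear_combination e2 - e1)
      | exact h2t1 (by linear_combination e1 - e2)
      | exact h2t2 (by linear_combination e2 - e1)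
      | exact h2t2 (by linear_combination e1 - e2)
end

section
/- Let S_n be the bundled star digraph on n vertices (centre c). Then the strongly connected node reliability of S_n, with each vertex independently operational with probability p, satisfies the recursion SCNRel(S_n, p) = (1-p)·SCNRel(S_{n-1}, p) + p·((1-p)^{n-1} + p), where S_{n-1} is the bundled star obtained by deleting one leaf. -/
open scoped Classical

/-- Strongly connected node reliability of the bundled star on `n` vertices
(vertex `0` is the centre, joined to each leaf by a bundle). -/
noncomputable def scnrelStar (n : ℕ) (p : ℝ) : ℝ :=
  ∑ T ∈ (Finset.univ : Finset (Finset (Fin n))).filter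
    (fun T => T.Nonempty ∧ ∀ x ∈ T, ∀ y ∈ T, Relation.ReflTransGen
      (fun u v : Fin n => u ∈ T ∧ v ∈ T ∧ u ≠ v ∧ (u.val = 0 ∨ v.val = 0)) x y),
    p ^ T.card * (1 - p) ^ (n - T.card)

private lemma binom_sum {α : Type*} (s : Finset α) (p : ℝ) :
    ∑ T ∈ s.powerset, p ^ T.card * (1 - p) ^ (s.card - T.card) = 1 := by
  have h := Finset.prod_add (fun _ : α => p) (fun _ : α => (1 - p)) s
  simp only [show p + (1 - p) = 1 by ring, Finset.prod_const, one_pow] at h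
  conv_rhs => rw [h]
  refine Finset.sum_congr rfl fun T hT => ?_
  rw [Finset.card_sdiff_of_subset (Finset.mem_powerset.mp hT)]

private lemma mem_char (n : ℕ) (T : Finset (Fin (n + 1))) :
    (T.Nonempty ∧ ∀ x ∈ T, ∀ y ∈ T, Relation.ReflTransGen
      (fun u v : Fin (n + 1) => u ∈ T ∧ v ∈ T ∧ u ≠ v ∧ (u.val = 0 ∨ v.val = 0)) x y)
    ↔ ((0 : Fin (n + 1)) ∈ T ∨ ((0 : Fin (n + 1)) ∉ T ∧ ∃ a, T = {a})) := by
  constructor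
  · rintro ⟨⟨a, ha⟩, hconn⟩
    by_cases h0 : (0 : Fin (n + 1)) ∈ T
    · exact Or.inl h0
    · refine Or.inr ⟨h0, a, ?_⟩
      have key : ∀ x ∈ T, x = a := by
        intro x hx
        rcases (hconn x hx a ha).cases_head with h | ⟨c, hc, -⟩
        · exact h
        · exfalso
          rcases hc.2.2.2 with h | h
          · have hx0 : x = 0 := Fin.ext (by simpa using h)
            exact h0 (hx0 ▸ hx)
          · have hc0 : c = 0 := Fin.ext (by simpa using h)
            exact h0 (hc0 ▸ hc.2.1)
      exact Finset.eq_singleton_iff_unique_mem.mpr ⟨ha, key⟩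
  · rintro (h0 | ⟨-, a, rfl⟩)
    · refine ⟨⟨0, h0⟩, fun x hx y hy => ?_⟩
      rcases eq_or_ne x y with rfl | hxy
      · exact .refl
      rcases eq_or_ne x 0 with rfl | hx0
      · exact .single ⟨hx, hy, hxy, Or.inl rfl⟩
      rcases eq_or_ne y 0 with rfl | hy0
      · exact .single ⟨hx, hy, hxy, Or.inr rfl⟩
      · exact .trans (.single ⟨hx, h0, hx0, Or.inr rfl⟩)
          (.single ⟨h0, hy, hy0.symm, Or.inl rfl⟩)
    · refine ⟨⟨a, Finset.mem_singleton_self a⟩, fun x hx y hy => ?_⟩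
      simp only [Finset.mem_singleton] at hx hy
      subst hx; subst hy; exact .refl

private lemma scnrelStar_closed (n : ℕ) (p : ℝ) :
    scnrelStar (n + 1) p = p + n * p * (1 - p) ^ n := by
  classical
  set u : Finset (Fin (n + 1)) := Finset.univ.erase 0 with hu
  have hucard : u.card = n := by
    rw [hu, Finset.card_erase_of_mem (Finset.mem_univ _), Finset.card_univ, Fintype.card_fin]
    omega
  set A : Finset (Finset (Fin (n + 1))) :=
      Finset.univ.filter (fun T => (0 : Fin (n + 1)) ∈ T) with hA
  set B : Finset (Finset (Fin (n + 1))) :=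
      u.image (fun a => ({a} : Finset (Fin (n + 1)))) with hB
  have hset : (Finset.univ : Finset (Finset (Fin (n + 1)))).filter
      (fun T => T.Nonempty ∧ ∀ x ∈ T, ∀ y ∈ T, Relation.ReflTransGen
        (fun u v : Fin (n + 1) => u ∈ T ∧ v ∈ T ∧ u ≠ v ∧ (u.val = 0 ∨ v.val = 0)) x y)
      = A ∪ B := by
    ext T
    rw [Finset.mem_filter, Finset.mem_union, hA, hB, Finset.mem_filter, Finset.mem_image]
    simp only [Finset.mem_univ, true_and, mem_char]
    constructor
    · rintro (h | ⟨h0, a, rfl⟩)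
      · exact Or.inl h
      · refine Or.inr ⟨a, ?_, rfl⟩
        rw [hu, Finset.mem_erase]
        refine ⟨fun ha => h0 ?_, Finset.mem_univ a⟩
        rw [ha]; exact Finset.mem_singleton_self 0
    · rintro (h | ⟨a, ha, rfl⟩)
      · exact Or.inl h
      · rw [hu, Finset.mem_erase] at ha
        refine Or.inr ⟨fun h => ha.1 ?_, a, rfl⟩
        exact (Finset.mem_singleton.mp h).symm
  have hdisj : Disjoint A B := by
    rw [Finset.disjoint_left]
    rintro T hTA hTB
    rw [hB, Finset.mem_image] at hTB
    obtain ⟨a, ha, rfl⟩ := hTB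
    rw [hA, Finset.mem_filter] at hTA
    have := Finset.mem_singleton.mp hTA.2
    rw [hu, Finset.mem_erase] at ha
    exact ha.1 this.symm
  rw [scnrelStar, hset, Finset.sum_union hdisj]
  have hAsum : ∑ T ∈ A, p ^ T.card * (1 - p) ^ (n + 1 - T.card) = p := by
    have hbij : ∑ T ∈ A, p ^ T.card * (1 - p) ^ (n + 1 - T.card)
        = ∑ S ∈ u.powerset, p ^ (S.card + 1) * (1 - p) ^ (n - S.card) := by
      refine Finset.sum_nbij' (fun T => T.erase 0) (fun S => insert 0 S) ?_ ?_ ?_ ?_ ?_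
      · intro T hT
        rw [Finset.mem_powerset, hu]
        exact Finset.erase_subset_erase _ (Finset.subset_univ T)
      · intro S hS
        rw [hA, Finset.mem_filter]
        exact ⟨Finset.mem_univ _, Finset.mem_insert_self _ _⟩
      · intro T hT
        rw [hA, Finset.mem_filter] at hT
        exact Finset.insert_erase hT.2
      · intro S hS
        rw [Finset.mem_powerset, hu] at hS
        have : (0 : Fin (n + 1)) ∉ S := fun h => (Finset.mem_erase.mp (hS h)).1 rfl
        exact Finset.erase_insert this
      · intro T hT
        rw [hA, Finset.mem_filter] at hT
        have hc : (T.erase 0).card = T.card - 1 := Finset.card_erase_of_mem hT.2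
        have h1 : 1 ≤ T.card := Finset.card_pos.mpr ⟨0, hT.2⟩
        have hle : T.card ≤ n + 1 := by simpa using Finset.card_le_univ T
        rw [hc, Nat.sub_add_cancel h1]
        congr 2
        omega
    rw [hbij]
    have : ∑ S ∈ u.powerset, p ^ (S.card + 1) * (1 - p) ^ (n - S.card)
        = p * ∑ S ∈ u.powerset, p ^ S.card * (1 - p) ^ (u.card - S.card) := by
      rw [Finset.mul_sum]
      refine Finset.sum_congr rfl fun S hS => ?_
      rw [hucard, pow_succ]
      ring
    rw [this, binom_sum, mul_one]
  have hBsum : ∑ T ∈ B, p ^ T.card * (1 - p) ^ (n + 1 - T.card)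
      = n * (p * (1 - p) ^ n) := by
    rw [hB, Finset.sum_image (fun a _ b _ h => Finset.singleton_injective h)]
    simp only [Finset.card_singleton, pow_one, Nat.add_sub_cancel]
    rw [Finset.sum_const, hucard, nsmul_eq_mul]
  rw [hAsum, hBsum]
  ring

/-- Recursion for the strongly connected node reliability of the bundled star:
`SCNRel(S_n,p) = (1-p)·SCNRel(S_{n-1},p) + p·((1-p)^{n-1} + p)`. -/
theorem scnrelStar_recursion (n : ℕ) (hn : 3 ≤ n) (p : ℝ) :
    scnrelStar n p = (1 - p) * scnrelStar (n - 1) p + p * ((1 - p) ^ (n - 1) + p) := by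
  obtain ⟨k, rfl⟩ : ∃ k, n = k + 2 := ⟨n - 2, by omega⟩
  have h1 : k + 2 - 1 = k + 1 := rfl
  rw [h1, show k + 2 = (k + 1) + 1 from rfl, scnrelStar_closed (k + 1) p,
    scnrelStar_closed k p]
  push_cast
  ring
end

section
/- Let n = 2k and G = Γ(Z_{2k}, {1, k+1}). The number of 2-element vertex subsets whose deletion leaves an induced subdigraph that is not strongly connected is exactly k; hence F_2(G) = k(2k-1) - k = k(2k-2), where F_2 counts the 2-element subsets whose deletion leaves a strongly connected induced subdigraph. -/
open scoped Classical

section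
variable {k : ℕ}

lemma castNe {i j : ℕ} (hik : i < 2*k) (hjk : j < 2*k) (hij : i ≠ j) :
    (i : ZMod (2*k)) ≠ (j : ZMod (2*k)) := by
  have : NeZero (2*k) := ⟨by omega⟩
  intro h
  apply hij
  have := congrArg ZMod.val h
  rwa [ZMod.val_cast_of_lt hik, ZMod.val_cast_of_lt hjk] at this

lemma kk0 : (k : ZMod (2*k)) + (k : ZMod (2*k)) = 0 := by
  have : ((2*k : ℕ) : ZMod (2*k)) = 0 := ZMod.natCast_self _
  push_cast at this
  linear_combination this

variable (hk : 2 ≤ k)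
include hk

lemma one_ne : (1 : ZMod (2*k)) ≠ 0 := by
  have := castNe (k := k) (i := 1) (j := 0) (by omega) (by omega) (by omega); simpa using this

lemma two_ne : (2 : ZMod (2*k)) ≠ 0 := by
  have := castNe (k := k) (i := 2) (j := 0) (by omega) (by omega) (by omega); simpa using this

lemma k_ne : (k : ZMod (2*k)) ≠ 0 := by
  have := castNe (k := k) (i := k) (j := 0) (by omega) (by omega) (by omega); simpa using this

lemma k_ne_one : (k : ZMod (2*k)) ≠ 1 := by
  have := castNe (k := k) (i := k) (j := 1) (by omega) (by omega) (by omega); simpa using this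

lemma ksucc_ne : (k : ZMod (2*k)) + 1 ≠ 0 := by
  have := castNe (k := k) (i := k+1) (j := 0) (by omega) (by omega) (by omega); simpa using this

lemma memT {a b x : ZMod (2*k)} [NeZero (2*k)] (h : x ∉ ({a, b} : Finset (ZMod (2*k)))) :
    x ∈ Finset.univ \ ({a, b} : Finset (ZMod (2*k))) :=
  Finset.mem_sdiff.mpr ⟨Finset.mem_univ _, h⟩

lemma notmem {a b x : ZMod (2*k)} [NeZero (2*k)] (h1 : x ≠ a) (h2 : x ≠ b) :
    x ∉ ({a, b} : Finset (ZMod (2*k))) := by simp [h1, h2]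

lemma walk [NeZero (2*k)] (a b : ZMod (2*k)) (hab : b ≠ a + k) :
    ∀ m : ℕ, ∀ x : ZMod (2*k), x ∉ ({a, b} : Finset (ZMod (2*k))) →
      x + (m : ZMod (2*k)) ∉ ({a, b} : Finset (ZMod (2*k))) →
      Relation.ReflTransGen
        (fun u v : ZMod (2 * k) => u ∈ Finset.univ \ ({a, b} : Finset (ZMod (2*k))) ∧
          v ∈ Finset.univ \ ({a, b} : Finset (ZMod (2*k))) ∧
          (v - u = 1 ∨ v - u = (k : ZMod (2 * k)) + 1)) x (x + (m : ZMod (2*k))) := by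
  have hab' : a ≠ b + (k : ZMod (2*k)) := by
    intro h
    apply hab
    have : a + (k : ZMod (2*k)) = b := by rw [h]; linear_combination kk0 (k := k)
    exact this.symm
  intro m
  induction m using Nat.strong_induction_on with
  | _ m ih =>
    rcases m with _ | m
    · intro x hx _
      simpa using Relation.ReflTransGen.refl
    · intro x hx hx1
      have e1 : x + ((m+1 : ℕ) : ZMod (2*k)) = x + (m : ZMod (2*k)) + 1 := by push_cast; ring
      rw [e1] at hx1 ⊢
      by_cases hA : x + (m : ZMod (2*k)) ∈ ({a, b} : Finset (ZMod (2*k)))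
      · -- x + m is deleted; need detours
        rcases m with _ | m
        · exfalso; apply hx; simpa using hA
        · have e2 : x + ((m+1 : ℕ) : ZMod (2*k)) = x + (m : ZMod (2*k)) + 1 := by push_cast; ring
          rw [e2] at hA
          simp only [Finset.mem_insert, Finset.mem_singleton] at hA
          by_cases hB : x + (m : ZMod (2*k)) ∈ ({a, b} : Finset (ZMod (2*k)))
          · -- two consecutive deleted vertices: x+m and x+m+1
            rcases m with _ | m
            · exfalso; apply hx; simpa using hB
            · have e3 : x + ((m+1 : ℕ) : ZMod (2*k)) = x + (m : ZMod (2*k)) + 1 := by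
                push_cast; ring
              rw [e3] at hB
              simp only [Finset.mem_insert, Finset.mem_singleton] at hB
              -- deleted: A1 = x+m+1, A2 = x+m+2 ; go x+m → x+m+k+1 → x+m+k+2 → x+m+3
              set p0 := x + (m : ZMod (2*k)) with hp0
              have hA1A2 : (p0 + 1 = a ∧ p0 + 2 = b) ∨ (p0 + 1 = b ∧ p0 + 2 = a) := by
                rcases hB with h1 | h1 <;> rcases hA with h2 | h2
                · exfalso; apply one_ne hk; linear_combination h2 - h1 - e3
                · exact Or.inl ⟨h1, by linear_combination h2 - e3⟩
                · exact Or.inr ⟨h1, by linear_combination h2 - e3⟩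
                · exfalso; apply one_ne hk; linear_combination h2 - h1 - e3
              have hp0F : p0 ∉ ({a, b} : Finset (ZMod (2*k))) := by
                apply notmem hk <;> intro h <;> rcases hA1A2 with ⟨u1, u2⟩ | ⟨u1, u2⟩
                · exact one_ne hk (by linear_combination u1 - h)
                · exact two_ne hk (by linear_combination u2 - h)
                · exact two_ne hk (by linear_combination u2 - h)
                · exact one_ne hk (by linear_combination u1 - h)
              have hz1F : p0 + (k : ZMod (2*k)) + 1 ∉ ({a, b} : Finset (ZMod (2*k))) := by
                apply notmem hk <;> intro h <;> rcases hA1A2 with ⟨u1, u2⟩ | ⟨u1, u2⟩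
                · exact k_ne hk (by linear_combination h - u1)
                · exact k_ne_one hk (by linear_combination h - u2)
                · exact k_ne_one hk (by linear_combination h - u2)
                · exact k_ne hk (by linear_combination h - u1)
              have hz2F : p0 + (k : ZMod (2*k)) + 2 ∉ ({a, b} : Finset (ZMod (2*k))) := by
                apply notmem hk <;> intro h <;> rcases hA1A2 with ⟨u1, u2⟩ | ⟨u1, u2⟩
                · exact ksucc_ne hk (by linear_combination h - u1)
                · exact k_ne hk (by linear_combination h - u2)
                · exact k_ne hk (by linear_combination h - u2)
                · exact ksucc_ne hk (by linear_combination h - u1)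
              have r0 := ih m (by omega) x hx hp0F
              have goal_eq : x + ((m+1+1 : ℕ) : ZMod (2*k)) + 1 = p0 + 3 := by
                rw [hp0]; push_cast; ring
              rw [goal_eq]
              refine ((r0.tail (c := p0 + (k : ZMod (2*k)) + 1) ?_).tail
                (c := p0 + (k : ZMod (2*k)) + 2) ?_).tail ?_
              · exact ⟨memT hk hp0F, memT hk hz1F, Or.inr (by ring)⟩
              · exact ⟨memT hk hz1F, memT hk hz2F, Or.inl (by ring)⟩
              · refine ⟨memT hk hz2F, memT hk ?_, Or.inr (by linear_combination -kk0 (k := k))⟩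
                have : x + ((m+1+1 : ℕ) : ZMod (2*k)) + 1 = p0 + 3 := goal_eq
                rw [← this]; exact hx1
          · -- only x+m+1 deleted: detour x+m → x+m+k+1 → x+m+2
            have r0 := ih m (by omega) x hx hB
            set p0 := x + (m : ZMod (2*k)) with hp0
            have hz1F : p0 + (k : ZMod (2*k)) + 1 ∉ ({a, b} : Finset (ZMod (2*k))) := by
              apply notmem hk <;> intro h <;> rcases hA with u | u
              · exact k_ne hk (by linear_combination h - u)
              · exact hab (by linear_combination h - u - kk0 (k := k))
              · exact hab' (by linear_combination h - u - kk0 (k := k))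
              · exact k_ne hk (by linear_combination h - u)
            have goal_eq : x + ((m+1 : ℕ) : ZMod (2*k)) + 1 = p0 + 2 := by
              rw [hp0]; push_cast; ring
            rw [goal_eq]
            rw [goal_eq] at hx1
            refine (r0.tail (c := p0 + (k : ZMod (2*k)) + 1) ?_).tail ?_
            · exact ⟨memT hk hB, memT hk hz1F, Or.inr (by ring)⟩
            · exact ⟨memT hk hz1F, memT hk hx1, Or.inr (by linear_combination -kk0 (k := k))⟩
      · -- simple +1 step
        have r0 := ih m (by omega) x hx hA
        exact r0.tail ⟨memT hk hA, memT hk hx1, Or.inl (by ring)⟩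
end

section
variable {k : ℕ} (hk : 2 ≤ k)
include hk

lemma sc_of_good [NeZero (2*k)] (a b : ZMod (2*k)) (hab : b ≠ a + (k : ZMod (2*k))) :
    ∀ x ∈ Finset.univ \ ({a, b} : Finset (ZMod (2*k))),
      ∀ y ∈ Finset.univ \ ({a, b} : Finset (ZMod (2*k))),
      Relation.ReflTransGen
        (fun u v : ZMod (2 * k) => u ∈ Finset.univ \ ({a, b} : Finset (ZMod (2*k))) ∧
          v ∈ Finset.univ \ ({a, b} : Finset (ZMod (2*k))) ∧
          (v - u = 1 ∨ v - u = (k : ZMod (2 * k)) + 1)) x y := by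
  intro x hx y hy
  have hx' : x ∉ ({a, b} : Finset (ZMod (2*k))) := (Finset.mem_sdiff.mp hx).2
  have hy' : y ∉ ({a, b} : Finset (ZMod (2*k))) := (Finset.mem_sdiff.mp hy).2
  have hval : x + (((y - x).val : ℕ) : ZMod (2*k)) = y := by
    rw [ZMod.natCast_val, ZMod.cast_id]; ring
  have := walk hk a b hab ((y - x).val) x hx' (by rw [hval]; exact hy')
  rwa [hval] at this

lemma not_sc_pair [NeZero (2*k)] (a : ZMod (2*k)) :
    ¬ (∀ x ∈ Finset.univ \ ({a, a + (k : ZMod (2*k))} : Finset (ZMod (2*k))),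
      ∀ y ∈ Finset.univ \ ({a, a + (k : ZMod (2*k))} : Finset (ZMod (2*k))),
      Relation.ReflTransGen
        (fun u v : ZMod (2 * k) =>
          u ∈ Finset.univ \ ({a, a + (k : ZMod (2*k))} : Finset (ZMod (2*k))) ∧
          v ∈ Finset.univ \ ({a, a + (k : ZMod (2*k))} : Finset (ZMod (2*k))) ∧
          (v - u = 1 ∨ v - u = (k : ZMod (2 * k)) + 1)) x y) := by
  intro h
  have hx : a - 1 ∈ Finset.univ \ ({a, a + (k : ZMod (2*k))} : Finset (ZMod (2*k))) := by
    refine memT hk (notmem hk ?_ ?_)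
    · intro h1; exact one_ne hk (by linear_combination -h1)
    · intro h1; exact ksucc_ne hk (by linear_combination -h1)
  have hy : a + 1 ∈ Finset.univ \ ({a, a + (k : ZMod (2*k))} : Finset (ZMod (2*k))) := by
    refine memT hk (notmem hk ?_ ?_)
    · intro h1; exact one_ne hk (by linear_combination h1)
    · intro h1; exact k_ne_one hk (by linear_combination -h1)
  have hreach := h (a - 1) hx (a + 1) hy
  rcases Relation.ReflTransGen.cases_head hreach with heq | ⟨c, ⟨_, hcmem, hstep⟩, -⟩
  · exact two_ne hk (by linear_combination -heq)
  · have hcF : c ∉ ({a, a + (k : ZMod (2*k))} : Finset (ZMod (2*k))) :=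
      (Finset.mem_sdiff.mp hcmem).2
    apply hcF
    simp only [Finset.mem_insert, Finset.mem_singleton]
    rcases hstep with h1 | h1
    · exact Or.inl (by linear_combination h1)
    · exact Or.inr (by linear_combination h1)

end

/-- In `Γ(Z_{2k}, {1, k+1})`, exactly `k` of the 2-element vertex subsets leave a
non-strongly-connected induced subdigraph upon deletion; hence
`F_2 = k(2k-1) - k = k(2k-2)` subsets leave a strongly connected one. -/
theorem circulant_even_F2 (k : ℕ) (hk : 2 ≤ k) [NeZero (2 * k)] :
    let sc : Finset (ZMod (2 * k)) → Prop := fun T =>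
      ∀ x ∈ T, ∀ y ∈ T, Relation.ReflTransGen
        (fun u v : ZMod (2 * k) => u ∈ T ∧ v ∈ T ∧
          (v - u = 1 ∨ v - u = (k : ZMod (2 * k)) + 1)) x y
    ((Finset.univ.powersetCard 2).filter
        (fun F => ¬ sc (Finset.univ \ F))).card = k ∧
    ((Finset.univ.powersetCard 2).filter
        (fun F => sc (Finset.univ \ F))).card = k * (2 * k - 2) := by
  intro sc
  have hcast : ∀ a : ZMod (2*k), ((a.val : ℕ) : ZMod (2*k)) = a := by
    intro a; rw [ZMod.natCast_val, ZMod.cast_id]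
  have hchar : ((Finset.univ.powersetCard 2).filter (fun F => ¬ sc (Finset.univ \ F)))
      = Finset.image
          (fun i : ℕ => ({(i : ZMod (2*k)), (i : ZMod (2*k)) + (k : ZMod (2*k))} :
            Finset (ZMod (2*k)))) (Finset.range k) := by
    ext F
    simp only [Finset.mem_filter, Finset.mem_powersetCard_univ, Finset.mem_image,
      Finset.mem_range]
    constructor
    · rintro ⟨hcard, hnsc⟩
      obtain ⟨a, b, hne, rfl⟩ := Finset.card_eq_two.mp hcard
      have hbad : b = a + (k : ZMod (2*k)) := by
        by_contra hgood
        exact hnsc (sc_of_good hk a b hgood)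
      subst hbad
      by_cases hv : a.val < k
      · exact ⟨a.val, hv, by rw [hcast a]⟩
      · refine ⟨a.val - k, ?_, ?_⟩
        · have := ZMod.val_lt a; omega
        · have e : ((a.val - k : ℕ) + k : ℕ) = a.val := by
            have := ZMod.val_lt a; omega
          have h2 : ((a.val - k : ℕ) : ZMod (2*k)) + (k : ZMod (2*k)) = a := by
            rw [← Nat.cast_add, e, hcast a]
          have h1 : ((a.val - k : ℕ) : ZMod (2*k)) = a + (k : ZMod (2*k)) := by
            linear_combination h2 - kk0 (k := k)
          have h3 : a + (k : ZMod (2*k)) + (k : ZMod (2*k)) = a := by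
            linear_combination kk0 (k := k)
          rw [h1, h3]
          exact Finset.pair_comm _ _
    · rintro ⟨i, hi, rfl⟩
      constructor
      · rw [Finset.card_pair]
        intro h; exact k_ne hk (by linear_combination -h)
      · exact not_sc_pair hk ((i : ZMod (2*k)))
  have hinj : Set.InjOn
      (fun i : ℕ => ({(i : ZMod (2*k)), (i : ZMod (2*k)) + (k : ZMod (2*k))} :
        Finset (ZMod (2*k)))) (Finset.range k) := by
    intro i hi j hj h
    simp only at h
    simp only [Finset.coe_range, Set.mem_Iio] at hi hj
    have hmem : (i : ZMod (2*k)) ∈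
        ({(j : ZMod (2*k)), (j : ZMod (2*k)) + (k : ZMod (2*k))} : Finset (ZMod (2*k))) := by
      rw [← h]; exact Finset.mem_insert_self _ _
    simp only [Finset.mem_insert, Finset.mem_singleton] at hmem
    rcases hmem with h1 | h1
    · have := congrArg ZMod.val h1
      rwa [ZMod.val_cast_of_lt (by omega), ZMod.val_cast_of_lt (by omega)] at this
    · exfalso
      have h2 : (i : ZMod (2*k)) = ((j + k : ℕ) : ZMod (2*k)) := by push_cast; exact h1
      have := congrArg ZMod.val h2
      rw [ZMod.val_cast_of_lt (by omega), ZMod.val_cast_of_lt (by omega)] at this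
      omega
  have hbadcard : ((Finset.univ.powersetCard 2).filter
      (fun F => ¬ sc (Finset.univ \ F))).card = k := by
    rw [hchar, Finset.card_image_of_injOn hinj, Finset.card_range]
  refine ⟨hbadcard, ?_⟩
  have htot : (Finset.univ.powersetCard 2 : Finset (Finset (ZMod (2*k)))).card
      = k * (2*k - 1) := by
    rw [Finset.card_powersetCard, Finset.card_univ, ZMod.card, Nat.choose_two_right]
    have e : 2*k*(2*k-1) = k*(2*k-1)*2 := by ring
    rw [e, Nat.mul_div_cancel _ (by norm_num)]
  have hsum := Finset.card_filter_add_card_filter_not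
    (s := (Finset.univ.powersetCard 2 : Finset (Finset (ZMod (2*k)))))
    (p := fun F => sc (Finset.univ \ F))
  rw [hbadcard, htot] at hsum
  have e2 : k*(2*k-1) = k*(2*k-2) + k := by
    have e : 2*k-1 = (2*k-2)+1 := by omega
    rw [e, Nat.mul_add, Nat.mul_one]
  rw [e2] at hsum
  exact Nat.add_right_cancel hsum
end
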